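/- If U is a subword of V_i with |U| ≥ (4/M)|V_i|, where M = 24n, n ≥ 2, and V_i = h₁ h₂^{Mi+1} h₁ ⋯ h₁ h₂^{M(i+1)} h₁, then |U| > 2M(i+1) + 2, and consequently U contains a subword of the form h₁ h₂^k h₁ with Mi+1 ≤ k ≤ M(i+1). -/

import Mathlib

/-!
`V_i` is `h₁ h₂^{a₁} h₁ ⋯ h₁ h₂^{a_M} h₁` with block lengths `a_j = Mi + j ≤ M(i+1)`, and
`2|V_i| = M(2Mi + M + 3) + 2`, so `|U| ≥ (4/M)|V_i| > 4Mi + 2M + 6 > 2M(i+1) + 2`.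
A factor of such a word longer than `2·max a_j + 2` contains a whole block: the letters it has
before the start `h₁` of the first block beginning inside it number at most `max a_j + 1`, so
at least `max a_j + 2` letters remain, enough to cover that block `h₁ h₂^{a_j} h₁`.
-/

/-- The two-letter alphabet {h₁, h₂}, encoded as `Fin 2`. -/
def h1 : Fin 2 := 0
def h2 : Fin 2 := 1

/-- The word `V_i = h₁ h₂^{Mi+1} h₁ h₂^{Mi+2} ⋯ h₁ h₂^{M(i+1)} h₁`. -/
def Vword (M i : ℕ) : List (Fin 2) :=
  [h1] ++ (List.range M).flatMap (fun j => List.replicate (M * i + 1 + j) h2 ++ [h1])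

/-- The pattern `h₁ h₂^k h₁`. -/
def pat (k : ℕ) : List (Fin 2) := [h1] ++ List.replicate k h2 ++ [h1]

def blockWord (L : List ℕ) : List (Fin 2) :=
  [h1] ++ L.flatMap (fun a => List.replicate a h2 ++ [h1])

def Vblocks (M i : ℕ) : List ℕ :=
  (List.range M).map (fun j => M * i + 1 + j)

section blockWord

variable {N : ℕ} {L : List ℕ} {U : List (Fin 2)}

theorem blockWord_nil : blockWord [] = [h1] := rfl

theorem blockWord_cons (a : ℕ) (L : List ℕ) :
    blockWord (a :: L) = (h1 :: List.replicate a h2) ++ blockWord L := by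
  simp [blockWord]

theorem pat_prefix_blockWord_cons (a : ℕ) (L : List ℕ) : pat a <+: blockWord (a :: L) := by
  refine ⟨L.flatMap (fun a => List.replicate a h2 ++ [h1]), ?_⟩
  simp [blockWord, pat]

theorem length_blockWord (L : List ℕ) : (blockWord L).length = L.sum + L.length + 1 := by
  induction L with
  | nil => rfl
  | cons a L ih =>
    rw [blockWord_cons, List.length_append, ih]
    simp only [List.length_cons, List.length_replicate, List.sum_cons]
    omega

theorem exists_pat_prefix_of_prefix_blockWord (hU : U <+: blockWord L)
    (hL : ∀ a ∈ L, a ≤ N) (hlen : N + 2 ≤ U.length) : ∃ a ∈ L, pat a <+: U := by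
  cases L with
  | nil =>
    have := hU.length_le
    simp only [blockWord_nil, List.length_singleton] at this
    omega
  | cons a L =>
    have ha := hL a List.mem_cons_self
    refine ⟨a, List.mem_cons_self, List.prefix_of_prefix_length_le
      (pat_prefix_blockWord_cons a L) hU ?_⟩
    simp only [pat, List.length_append, List.length_singleton, List.length_replicate]
    omega

theorem exists_pat_infix_of_infix_blockWord (hU : U <:+: blockWord L)
    (hL : ∀ a ∈ L, a ≤ N) (hlen : 2 * N + 2 < U.length) : ∃ a ∈ L, pat a <:+: U := by
  obtain ⟨A, V, h⟩ := hU
  induction L generalizing A with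
  | nil =>
    have := congrArg List.length h
    simp only [blockWord_nil, List.length_append, List.length_singleton] at this
    omega
  | cons a L ih =>
    have ha := hL a List.mem_cons_self
    rw [blockWord_cons, List.append_assoc, List.append_eq_append_iff] at h
    rcases h with ⟨T, hT, hUV⟩ | ⟨A', -, hA'⟩
    · -- `U` starts at most `a + 1` letters before the first `h₁` of `blockWord L`.
      have hTa : T.length ≤ a + 1 := by
        have := congrArg List.length hT
        simp only [List.length_cons, List.length_replicate, List.length_append] at this
        omega
      rcases List.append_eq_append_iff.1 hUV with ⟨S, hTS, -⟩ | ⟨S, rfl, hS⟩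
      · have := congrArg List.length hTS
        simp only [List.length_append] at this
        omega
      · obtain ⟨b, hb, hbS⟩ := exists_pat_prefix_of_prefix_blockWord ⟨V, hS.symm⟩
          (fun x hx => hL x (List.mem_cons_of_mem a hx))
          (by simp only [List.length_append] at hlen; omega)
        exact ⟨b, List.mem_cons_of_mem a hb, hbS.isInfix.trans (List.suffix_append T S).isInfix⟩
    · obtain ⟨b, hb, hbU⟩ := ih (fun x hx => hL x (List.mem_cons_of_mem a hx)) A'
        (by rw [hA', List.append_assoc])
      exact ⟨b, List.mem_cons_of_mem a hb, hbU⟩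

end blockWord

theorem Vword_eq_blockWord (M i : ℕ) : Vword M i = blockWord (Vblocks M i) := by
  simp [Vword, blockWord, Vblocks, List.flatMap_map]

theorem mem_Vblocks {M i a : ℕ} (ha : a ∈ Vblocks M i) : M * i + 1 ≤ a ∧ a ≤ M * (i + 1) := by
  obtain ⟨j, hj, rfl⟩ := List.mem_map.1 ha
  rw [List.mem_range] at hj
  constructor <;> nlinarith

theorem two_mul_sum_map_range_add (c m : ℕ) :
    2 * ((List.range m).map (fun j => c + j)).sum + m = m * (2 * c + m) := by
  induction m with
  | zero => simp
  | succ m ih =>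
    rw [List.range_succ, List.map_append, List.sum_append]
    simp only [List.map_cons, List.map_nil, List.sum_cons, List.sum_nil]
    nlinarith

theorem two_mul_length_Vword (M i : ℕ) :
    2 * (Vword M i).length = M * (2 * M * i + M + 3) + 2 := by
  have hsum := two_mul_sum_map_range_add (M * i + 1) M
  rw [Vword_eq_blockWord, length_blockWord, Vblocks, List.length_map, List.length_range]
  nlinarith

theorem lt_of_four_mul_length_Vword_le {M i ℓ : ℕ} (hM : 0 < M)
    (h : 4 * (Vword M i).length ≤ M * ℓ) : 2 * M * (i + 1) + 2 < ℓ := by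
  have hV := two_mul_length_Vword M i
  refine lt_of_mul_lt_mul_left (a := M) ?_ (Nat.zero_le _)
  nlinarith

theorem stmt_4_general (n : ℕ) (hn : 2 ≤ n) (M : ℕ) (hM : M = 24 * n) (i : ℕ)
    (U A B : List (Fin 2)) (hsub : Vword M i = A ++ U ++ B)
    (hlen : 4 / (M : ℚ) * ((Vword M i).length : ℚ) ≤ (U.length : ℚ)) :
    2 * M * (i + 1) + 2 < U.length ∧
    ∃ k : ℕ, M * i + 1 ≤ k ∧ k ≤ M * (i + 1) ∧
      ∃ C D : List (Fin 2), U = C ++ pat k ++ D := by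
  have hM0 : 0 < M := by omega
  have hlenN : 4 * (Vword M i).length ≤ M * U.length := by
    rw [div_mul_eq_mul_div, div_le_iff₀ (by positivity)] at hlen
    have : ((4 * (Vword M i).length : ℕ) : ℚ) ≤ (M * U.length : ℕ) := by push_cast; linarith
    exact_mod_cast this
  have hU := lt_of_four_mul_length_Vword_le hM0 hlenN
  refine ⟨hU, ?_⟩
  obtain ⟨k, hk, C, D, hCD⟩ := exists_pat_infix_of_infix_blockWord (N := M * (i + 1))
    ⟨A, B, (Vword_eq_blockWord M i ▸ hsub).symm⟩ (fun a ha => (mem_Vblocks ha).2)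
    (by rwa [← mul_assoc])
  exact ⟨k, (mem_Vblocks hk).1, (mem_Vblocks hk).2, C, D, hCD.symm⟩

/-- if `U` is a subword of `V_i` with `|U| ≥ (4/M)|V_i|` (`M = 24n`, `n ≥ 2`),
then `|U| > 2M(i+1) + 2` and `U` contains a subword `h₁ h₂^k h₁` with `Mi+1 ≤ k ≤ M(i+1)`. -/
theorem stmt_4 (n : ℕ) (hn : 2 ≤ n) (M : ℕ) (hM : M = 24 * n) (i : ℕ) (hi : 1 ≤ i)
    (U A B : List (Fin 2)) (hsub : Vword M i = A ++ U ++ B)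
    (hlen : 4 / (M : ℚ) * ((Vword M i).length : ℚ) ≤ (U.length : ℚ)) :
    2 * M * (i + 1) + 2 < U.length ∧
    ∃ k : ℕ, M * i + 1 ≤ k ∧ k ≤ M * (i + 1) ∧
      ∃ C D : List (Fin 2), U = C ++ pat k ++ D :=
  stmt_4_general n hn M hM i U A B hsub hlen
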